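/- Let P be a partially ordered set with a commutative flow T, let F, G : P → Set be functors, fix η ∈ [0,∞), and let (φ, ψ) be a T_η-assignment between F and G. Write p ⋖ q for the covering relation (p < q and there is no r with p < r < q). Suppose every pair p < q in P admits a finite chain p = p_0 ⋖ p_1 ⋖ ⋯ ⋖ p_n = q of covering relations. Then sup_{p ≤ q} L_parL^{p,q}(φ) = sup_{p ⋖ q} L_parL^{p,q}(φ) and sup_{p ≤ q} L_parR^{p,q}(ψ) = sup_{p ⋖ q} L_parR^{p,q}(ψ); consequently the total loss satisfies L(φ,ψ) = max{ sup_{p ⋖ q} L_parL^{p,q}(φ), sup_{p ⋖ q} L_parR^{p,q}(ψ), sup_{p ∈ P} L_down^p(φ,ψ), sup_{p ∈ P} L_up^p(φ,ψ) }. -/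

import Mathlib

open scoped NNReal ENNReal

universe u v

/-- A commutative flow on a partially ordered set `P`. -/
structure CFlow (P : Type u) [PartialOrder P] where
  T : ℝ≥0 → P → P
  mono : ∀ ε : ℝ≥0, Monotone (T ε)
  T_zero : ∀ p : P, T 0 p = p
  T_add : ∀ (ε δ : ℝ≥0) (p : P), T (ε + δ) p = T ε (T δ p)
  le_T : ∀ (ε : ℝ≥0) (p : P), p ≤ T ε p
  T_le_T : ∀ {ε δ : ℝ≥0} (p : P), ε ≤ δ → T ε p ≤ T δ p

/-- A functor `P → Set` for a poset `P`. -/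
structure PosetFunctor (P : Type u) [PartialOrder P] where
  obj : P → Type v
  map : ∀ {p q : P}, p ≤ q → obj p → obj q
  map_id : ∀ (p : P) (a : obj p), map (le_refl p) a = a
  map_comp : ∀ {p q r : P} (h₁ : p ≤ q) (h₂ : q ≤ r) (a : obj p),
      map h₂ (map h₁ a) = map (h₁.trans h₂) a

/-- The merging distance `d_q^F(a,b)`, valued in `[0,∞]`. -/
noncomputable def mergeDist {P : Type u} [PartialOrder P] (T : CFlow P)
    (F : PosetFunctor P) (q : P) (a b : F.obj q) : ℝ≥0∞ :=
  sInf {x : ℝ≥0∞ | ∃ ε : ℝ≥0, x = (ε : ℝ≥0∞) ∧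
    F.map (T.le_T ε q) a = F.map (T.le_T ε q) b}

/-- The set `D_q^F` of reducing constants of `q` on `F`. -/
def reducingSet {P : Type u} [PartialOrder P] (T : CFlow P)
    (F : PosetFunctor P) (q : P) : Set ℝ≥0 :=
  {δ | ∀ (γ₁ γ₂ : ℝ≥0) (h₁ : γ₁ < δ) (h₂ : δ ≤ γ₂),
    ¬ Function.Injective (F.map (T.T_le_T q (h₁.le.trans h₂)))}

/-- The left parallelogram loss `L_parL^{p,q}(φ)`. -/
noncomputable def LparL {P : Type u} [PartialOrder P] (T : CFlow P)
    (F G : PosetFunctor P) (η : ℝ≥0)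
    (φ : ∀ p : P, F.obj p → G.obj (T.T η p)) {p q : P} (hpq : p ≤ q) : ℝ≥0∞ :=
  ⨆ a : F.obj p, mergeDist T G (T.T η q)
    (φ q (F.map hpq a)) (G.map (T.mono η hpq) (φ p a))

/-- The right parallelogram loss `L_parR^{p,q}(ψ)`. -/
noncomputable def LparR {P : Type u} [PartialOrder P] (T : CFlow P)
    (F G : PosetFunctor P) (η : ℝ≥0)
    (ψ : ∀ p : P, G.obj p → F.obj (T.T η p)) {p q : P} (hpq : p ≤ q) : ℝ≥0∞ :=
  ⨆ b : G.obj p, mergeDist T F (T.T η q)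
    (ψ q (G.map hpq b)) (F.map (T.mono η hpq) (ψ p b))

/-- The lower triangle loss `L_down^p(φ,ψ)`. -/
noncomputable def Ldown {P : Type u} [PartialOrder P] (T : CFlow P)
    (F G : PosetFunctor P) (η : ℝ≥0)
    (φ : ∀ p : P, F.obj p → G.obj (T.T η p))
    (ψ : ∀ p : P, G.obj p → F.obj (T.T η p)) (p : P) : ℝ≥0∞ :=
  ⨆ a : F.obj p, mergeDist T F (T.T η (T.T η p))
    (ψ (T.T η p) (φ p a))
    (F.map ((T.le_T η p).trans (T.le_T η (T.T η p))) a)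

/-- The upper triangle loss `L_up^p(φ,ψ)`. -/
noncomputable def Lup {P : Type u} [PartialOrder P] (T : CFlow P)
    (F G : PosetFunctor P) (η : ℝ≥0)
    (φ : ∀ p : P, F.obj p → G.obj (T.T η p))
    (ψ : ∀ p : P, G.obj p → F.obj (T.T η p)) (p : P) : ℝ≥0∞ :=
  ⨆ b : G.obj p, mergeDist T G (T.T η (T.T η p))
    (φ (T.T η p) (ψ p b))
    (G.map ((T.le_T η p).trans (T.le_T η (T.T η p))) b)

/-! The merging distance is an ultrametric on each `F.obj q`, and the maps of `F` do not increase
it. Hence the parallelogram loss of a composite `p ≤ q ≤ r` is at most the maximum of the losses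
of `p ≤ q` and `q ≤ r`, so along a chain of covering relations the loss of `p ≤ q` is bounded by
the supremum over covering pairs. The loss of `p ≤ p` vanishes. -/

section MergeDist

variable {P : Type u} [PartialOrder P] (T : CFlow P) (F : PosetFunctor P)

lemma mergeDist_le_of_map_eq {q : P} {a b : F.obj q} {ε : ℝ≥0}
    (h : F.map (T.le_T ε q) a = F.map (T.le_T ε q) b) : mergeDist T F q a b ≤ ε :=
  sInf_le ⟨ε, rfl, h⟩

lemma map_le_T_eq_of_le {q : P} {a b : F.obj q} {ε δ : ℝ≥0} (hεδ : ε ≤ δ)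
    (h : F.map (T.le_T ε q) a = F.map (T.le_T ε q) b) :
    F.map (T.le_T δ q) a = F.map (T.le_T δ q) b := by
  rw [← F.map_comp (T.le_T ε q) (T.T_le_T q hεδ), h, F.map_comp]

lemma mergeDist_self (q : P) (a : F.obj q) : mergeDist T F q a a = 0 :=
  nonpos_iff_eq_zero.mp (mergeDist_le_of_map_eq T F (ε := 0) rfl)

lemma mergeDist_le_max (q : P) (a b c : F.obj q) :
    mergeDist T F q a c ≤ max (mergeDist T F q a b) (mergeDist T F q b c) := by
  refine le_of_le_of_eq ?_ sInf_sup_sInf.symm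
  refine le_iInf₂ fun _ ⟨⟨ε, hx, hε⟩, ⟨δ, hy, hδ⟩⟩ => ?_
  rw [hx, hy, ← ENNReal.coe_max]
  exact mergeDist_le_of_map_eq T F
    ((map_le_T_eq_of_le T F (le_max_left ε δ) hε).trans
      (map_le_T_eq_of_le T F (le_max_right ε δ) hδ))

lemma mergeDist_map_le {q q' : P} (h : q ≤ q') (a b : F.obj q) :
    mergeDist T F q' (F.map h a) (F.map h b) ≤ mergeDist T F q a b := by
  refine sInf_le_sInf ?_
  rintro _ ⟨ε, rfl, hε⟩
  refine ⟨ε, rfl, ?_⟩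
  rw [F.map_comp, F.map_comp, ← F.map_comp (T.le_T ε q) (T.mono ε h), hε, F.map_comp]

end MergeDist

section CoveringChains

variable {P : Type u} [PartialOrder P] {α : Type*} [CompleteLattice α]
  (f : ∀ p q : P, p ≤ q → α)

lemma le_of_transGen_covBy {p q : P} (h : Relation.TransGen (· ⋖ ·) p q) : p ≤ q :=
  h.trans_induction_on (fun h => h.le) (fun _ _ => le_trans)

lemma le_iSup_covBy_of_transGen
    (htrans : ∀ p q r (h₁ : p ≤ q) (h₂ : q ≤ r), f p r (h₁.trans h₂) ≤ f p q h₁ ⊔ f q r h₂)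
    {p q : P} (h : Relation.TransGen (· ⋖ ·) p q) (hpq : p ≤ q) :
    f p q hpq ≤ ⨆ (p : P) (q : P) (h : p ⋖ q), f p q h.le := by
  induction h using Relation.TransGen.trans_induction_on with
  | single h => exact le_iSup₂_of_le _ _ (le_iSup_of_le h le_rfl)
  | trans h₁ h₂ ih₁ ih₂ =>
    exact (htrans _ _ _ (le_of_transGen_covBy h₁) (le_of_transGen_covBy h₂)).trans
      (sup_le (ih₁ _) (ih₂ _))

theorem iSup_le_eq_iSup_covBy (hrefl : ∀ p, f p p le_rfl = ⊥)
    (htrans : ∀ p q r (h₁ : p ≤ q) (h₂ : q ≤ r), f p r (h₁.trans h₂) ≤ f p q h₁ ⊔ f q r h₂)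
    (hcov : ∀ p q : P, p < q → Relation.TransGen (· ⋖ ·) p q) :
    (⨆ (p : P) (q : P) (h : p ≤ q), f p q h) = ⨆ (p : P) (q : P) (h : p ⋖ q), f p q h.le := by
  refine le_antisymm (iSup₂_le fun p q => iSup_le fun hpq => ?_)
    (iSup₂_le fun p q => iSup_le fun h => le_iSup₂_of_le p q (le_iSup_of_le h.le le_rfl))
  rcases hpq.lt_or_eq with hlt | rfl
  · exact le_iSup_covBy_of_transGen f htrans (hcov p q hlt) hpq
  · simp [hrefl]

end CoveringChains

section ParallelogramLoss

variable {P : Type u} [PartialOrder P] (T : CFlow P) (F G : PosetFunctor P) (η : ℝ≥0)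
  (φ : ∀ p : P, F.obj p → G.obj (T.T η p))

lemma LparL_refl (p : P) : LparL T F G η φ (le_refl p) = 0 := by
  simp only [LparL, F.map_id, G.map_id, mergeDist_self, ENNReal.iSup_zero]

lemma LparL_trans_le {p q r : P} (h₁ : p ≤ q) (h₂ : q ≤ r) :
    LparL T F G η φ (h₁.trans h₂) ≤ max (LparL T F G η φ h₁) (LparL T F G η φ h₂) := by
  refine iSup_le fun a => ?_
  rw [← F.map_comp h₁ h₂, ← G.map_comp (T.mono η h₁) (T.mono η h₂)]
  refine (mergeDist_le_max T G _ _ (G.map (T.mono η h₂) (φ q (F.map h₁ a))) _).trans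
    (max_le ?_ ?_)
  · exact le_max_of_le_right (le_iSup_of_le (F.map h₁ a) le_rfl)
  · exact le_max_of_le_left ((mergeDist_map_le T G _ _ _).trans (le_iSup_of_le a le_rfl))

end ParallelogramLoss

/-- If every pair `p < q` in `P` is connected by a finite chain of covering relations, the
suprema of the parallelogram losses over all pairs `p ≤ q` equal the suprema over covering
pairs `p ⋖ q`; consequently the total loss is computed from covering pairs only. -/
theorem loss_eq_sup_covBy {P : Type u} [PartialOrder P]
    (T : CFlow P) (F G : PosetFunctor P) (η : ℝ≥0)
    (φ : ∀ p : P, F.obj p → G.obj (T.T η p))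
    (ψ : ∀ p : P, G.obj p → F.obj (T.T η p))
    (hcov : ∀ p q : P, p < q → Relation.TransGen (· ⋖ ·) p q) :
    (⨆ (p : P) (q : P) (h : p ≤ q), LparL T F G η φ h) =
      (⨆ (p : P) (q : P) (h : p ⋖ q), LparL T F G η φ h.le) ∧
    (⨆ (p : P) (q : P) (h : p ≤ q), LparR T F G η ψ h) =
      (⨆ (p : P) (q : P) (h : p ⋖ q), LparR T F G η ψ h.le) ∧
    max (max (⨆ (p : P) (q : P) (h : p ≤ q), LparL T F G η φ h)
             (⨆ (p : P) (q : P) (h : p ≤ q), LparR T F G η ψ h))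
        (max (⨆ p : P, Ldown T F G η φ ψ p) (⨆ p : P, Lup T F G η φ ψ p)) =
    max (max (⨆ (p : P) (q : P) (h : p ⋖ q), LparL T F G η φ h.le)
             (⨆ (p : P) (q : P) (h : p ⋖ q), LparR T F G η ψ h.le))
        (max (⨆ p : P, Ldown T F G η φ ψ p) (⨆ p : P, Lup T F G η φ ψ p)) := by
  have hL : (⨆ (p : P) (q : P) (h : p ≤ q), LparL T F G η φ h) =
      ⨆ (p : P) (q : P) (h : p ⋖ q), LparL T F G η φ h.le :=
    iSup_le_eq_iSup_covBy (fun _ _ h => LparL T F G η φ h) (LparL_refl T F G η φ)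
      (fun _ _ _ => LparL_trans_le T F G η φ) hcov
  -- `LparR T F G η ψ` is `LparL T G F η ψ`: the same loss with `F` and `G` exchanged.
  have hR : (⨆ (p : P) (q : P) (h : p ≤ q), LparR T F G η ψ h) =
      ⨆ (p : P) (q : P) (h : p ⋖ q), LparR T F G η ψ h.le :=
    iSup_le_eq_iSup_covBy (fun _ _ h => LparL T G F η ψ h) (LparL_refl T G F η ψ)
      (fun _ _ _ => LparL_trans_le T G F η ψ) hcov
  exact ⟨hL, hR, by rw [hL, hR]⟩
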